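/- arXiv:2401.04254 — 4 statements merged into one kernel-verified Lean document; each statement's English description precedes it below -/
import Mathlib

section
/- Let R be a local domain whose integral closure in its fraction field Q is a discrete valuation ring with valuation v. For a nonzero fractional ideal I of R, define v(I) = min{v(y) : y ∈ I, y ≠ 0}. Then v(tr_R(I)) = v(I) + v(I⁻¹). -/
/-- The trace ideal of an `R`-module `M`: the ideal generated by all images of
`R`-linear maps `M → R`. -/
noncomputable def traceIdeal (R M : Type*) [CommRing R] [AddCommGroup M] [Module R M] :
    Ideal R :=
  ⨆ f : M →ₗ[R] R, LinearMap.range f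

/-! An `R`-linear form on `I ⊆ Q` is determined by its value at one nonzero `y ∈ I`, hence is
multiplication by `f y / y ∈ I⁻¹ = 1 / I`; conversely every element of `I⁻¹` gives such a form.
So the trace ideal, read inside `Q`, is `I * I⁻¹`. Since `v` is additive on products and
ultrametric on sums, its minimum on `M * N` is the sum of its minima on `M` and `N`, attained at
a product of minimisers. -/

open Submodule

section Dual

variable {R Q : Type*} [CommRing R] [Field Q] [Algebra R Q] [IsFractionRing R Q]

lemma IsFractionRing.exists_algebraMap_mul_eq [IsDomain R] (x : Q) {y : Q} (hy : y ≠ 0) :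
    ∃ r s : R, algebraMap R Q s ≠ 0 ∧ algebraMap R Q s * x = algebraMap R Q r * y := by
  obtain ⟨⟨r, s⟩, hrs⟩ := IsLocalization.surj (nonZeroDivisors R) (x / y)
  have hs : algebraMap R Q s ≠ 0 :=
    IsFractionRing.to_map_ne_zero_of_mem_nonZeroDivisors s.2
  refine ⟨r, s, hs, ?_⟩
  rw [← hrs]
  field_simp

lemma exists_linearMap_algebraMap_apply_eq_mul {I : Submodule R Q} {q : Q} (hq : q ∈ 1 / I) :
    ∃ f : I →ₗ[R] R, ∀ x : I, algebraMap R Q (f x) = q * x := by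
  let e := LinearEquiv.ofInjective (Algebra.linearMap R Q) (IsFractionRing.injective R Q)
  have hmaps : ∀ x ∈ I, LinearMap.mulLeft R q x ∈ LinearMap.range (Algebra.linearMap R Q) :=
    fun x hx => one_eq_range (R := R) (A := Q) ▸ mem_div_iff_forall_mul_mem.1 hq x hx
  refine ⟨e.symm.toLinearMap ∘ₗ (LinearMap.mulLeft R q).restrict hmaps, fun x => ?_⟩
  change (e (e.symm _) : Q) = _
  rw [LinearEquiv.apply_symm_apply]
  rfl

variable [IsDomain R]

lemma algebraMap_linearMap_apply_mul_comm {I : Submodule R Q} (f : I →ₗ[R] R) (x y : I) :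
    algebraMap R Q (f x) * y = algebraMap R Q (f y) * x := by
  rcases eq_or_ne (y : Q) 0 with hy | hy
  · obtain rfl : y = 0 := Subtype.ext hy
    simp
  obtain ⟨r, s, hs, hsx⟩ := IsFractionRing.exists_algebraMap_mul_eq (R := R) (x : Q) hy
  have hsmul : s • x = r • y := Subtype.ext (by simpa [Algebra.smul_def] using hsx)
  have hf : algebraMap R Q s * algebraMap R Q (f x) = algebraMap R Q r * algebraMap R Q (f y) := by
    rw [← map_mul, ← map_mul, ← smul_eq_mul, ← smul_eq_mul, ← f.map_smul, ← f.map_smul, hsmul]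
  apply mul_left_cancel₀ hs
  linear_combination (y : Q) * hf - algebraMap R Q (f y) * hsx

lemma exists_mem_one_div_algebraMap_apply_eq_mul {I : Submodule R Q} (f : I →ₗ[R] R) :
    ∃ q ∈ 1 / I, ∀ x : I, algebraMap R Q (f x) = q * x := by
  by_cases hI : ∃ y : I, (y : Q) ≠ 0
  · obtain ⟨y, hy⟩ := hI
    have hfq : ∀ x : I, algebraMap R Q (f x) = algebraMap R Q (f y) / y * x := fun x => by
      rw [div_mul_eq_mul_div, ← algebraMap_linearMap_apply_mul_comm, mul_div_cancel_right₀ _ hy]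
    refine ⟨_, mem_div_iff_forall_mul_mem.2 fun x hx => ?_, hfq⟩
    exact mem_one.2 ⟨f ⟨x, hx⟩, hfq ⟨x, hx⟩⟩
  · push Not at hI
    refine ⟨0, zero_mem _, fun x => ?_⟩
    rw [show x = 0 from Subtype.ext (hI x), map_zero, map_zero, zero_mul]

theorem map_traceIdeal_eq_mul_one_div (I : Submodule R Q) :
    Submodule.map (Algebra.linearMap R Q) (traceIdeal R I) = I * (1 / I) := by
  apply le_antisymm
  · rw [traceIdeal, Submodule.map_iSup, iSup_le_iff]
    rintro f _ ⟨_, ⟨x, rfl⟩, rfl⟩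
    obtain ⟨q, hq, hfq⟩ := exists_mem_one_div_algebraMap_apply_eq_mul f
    rw [Algebra.linearMap_apply, hfq, mul_comm q]
    exact mul_mem_mul x.2 hq
  · refine mul_le.2 fun x hx q hq => ?_
    obtain ⟨f, hfq⟩ := exists_linearMap_algebraMap_apply_eq_mul hq
    refine ⟨f ⟨x, hx⟩, ?_, by rw [Algebra.linearMap_apply, hfq, mul_comm]⟩
    exact le_iSup (fun g : I →ₗ[R] R => LinearMap.range g) f ⟨⟨x, hx⟩, rfl⟩

end Dual

section ValueSet

variable {R K Γ : Type*} [CommSemiring R] [Field K] [Algebra R K]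
  [AddCommGroup Γ] [LinearOrder Γ] [IsOrderedAddMonoid Γ]

def valueSet (v : AddValuation K (WithTop Γ)) (M : Submodule R K) : Set Γ :=
  {n | ∃ y ∈ M, y ≠ 0 ∧ v y = n}

variable {v : AddValuation K (WithTop Γ)} {M N : Submodule R K} {a b : Γ}

lemma le_apply_of_isLeast_valueSet (ha : IsLeast (valueSet v M) a) {y : K} (hy : y ∈ M) :
    (a : WithTop Γ) ≤ v y := by
  rcases eq_or_ne y 0 with rfl | hy0
  · simp
  obtain ⟨n, hn⟩ := WithTop.ne_top_iff_exists.1 ((v.ne_top_iff).2 hy0)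
  rw [← hn]
  exact WithTop.coe_le_coe.2 (ha.2 ⟨y, hy, hy0, hn.symm⟩)

lemma coe_add_le_apply_of_mem_mul (ha : IsLeast (valueSet v M) a)
    (hb : IsLeast (valueSet v N) b) {z : K} (hz : z ∈ M * N) : ((a + b : Γ) : WithTop Γ) ≤ v z := by
  refine Submodule.mul_induction_on hz (fun m hm n hn => ?_) fun x y hx hy => v.map_le_add hx hy
  rw [v.map_mul, WithTop.coe_add]
  exact add_le_add (le_apply_of_isLeast_valueSet ha hm) (le_apply_of_isLeast_valueSet hb hn)

lemma IsLeast.valueSet_mul (ha : IsLeast (valueSet v M) a) (hb : IsLeast (valueSet v N) b) :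
    IsLeast (valueSet v (M * N)) (a + b) := by
  obtain ⟨x, hx, hx0, hvx⟩ := ha.1
  obtain ⟨y, hy, hy0, hvy⟩ := hb.1
  refine ⟨⟨x * y, mul_mem_mul hx hy, mul_ne_zero hx0 hy0, by rw [v.map_mul, hvx, hvy]; rfl⟩, ?_⟩
  rintro n ⟨z, hz, -, hvz⟩
  exact WithTop.coe_le_coe.1 (hvz ▸ coe_add_le_apply_of_mem_mul ha hb hz)

end ValueSet

theorem stmt3_general (R : Type*) [CommRing R] [IsDomain R]
    (Q : Type*) [Field Q] [Algebra R Q] [IsFractionRing R Q]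
    (v : AddValuation Q (WithTop ℤ))
    (I : Submodule R Q)
    -- `Iinv` is the inverse fractional ideal `I⁻¹ = {y ∈ Q : y I ⊆ R}`
    (Iinv : Submodule R Q)
    (hIinv : ∀ y : Q, y ∈ Iinv ↔ ∀ x ∈ I, ∃ r : R, y * x = algebraMap R Q r)
    (vI vInv vTr : ℤ)
    (hvI : IsLeast {n : ℤ | ∃ y ∈ I, y ≠ 0 ∧ v y = (n : WithTop ℤ)} vI)
    (hvInv : IsLeast {n : ℤ | ∃ y ∈ Iinv, y ≠ 0 ∧ v y = (n : WithTop ℤ)} vInv)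
    (hvTr : IsLeast {n : ℤ | ∃ r ∈ traceIdeal R I, algebraMap R Q r ≠ 0 ∧
      v (algebraMap R Q r) = (n : WithTop ℤ)} vTr) :
    vTr = vI + vInv := by
  have hIinv_eq : Iinv = 1 / I := by
    ext y
    simp only [hIinv, mem_div_iff_forall_mul_mem, mem_one, eq_comm]
  have hmul : IsLeast (valueSet v (I * (1 / I))) (vI + vInv) :=
    IsLeast.valueSet_mul hvI (hIinv_eq ▸ hvInv)
  rw [← map_traceIdeal_eq_mul_one_div] at hmul
  exact hvTr.unique (by simpa [valueSet] using hmul)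

/-- Let `R` be a local domain whose integral closure in its fraction field `Q` is a
discrete valuation ring with (additive) valuation `v`.  For a nonzero fractional ideal
`I`, letting `v(I)` be the minimum of `v` on nonzero elements, one has
`v(tr_R(I)) = v(I) + v(I⁻¹)`. -/
theorem stmt3 (R : Type*) [CommRing R] [IsDomain R] [IsLocalRing R]
    (Q : Type*) [Field Q] [Algebra R Q] [IsFractionRing R Q]
    [IsDiscreteValuationRing (integralClosure R Q)]
    (v : AddValuation Q (WithTop ℤ))
    -- `v` is the valuation of the DVR `R̄`: its valuation ring is the integral closure
    (hv : ∀ y : Q, 0 ≤ v y ↔ y ∈ integralClosure R Q)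
    -- `v` is normalized (surjective onto `ℤ`)
    (hnorm : ∃ y : Q, v y = 1)
    (I : Submodule R Q) (hIne : I ≠ ⊥) (hIfg : I.FG)
    -- `Iinv` is the inverse fractional ideal `I⁻¹ = {y ∈ Q : y I ⊆ R}`
    (Iinv : Submodule R Q)
    (hIinv : ∀ y : Q, y ∈ Iinv ↔ ∀ x ∈ I, ∃ r : R, y * x = algebraMap R Q r)
    (vI vInv vTr : ℤ)
    (hvI : IsLeast {n : ℤ | ∃ y ∈ I, y ≠ 0 ∧ v y = (n : WithTop ℤ)} vI)
    (hvInv : IsLeast {n : ℤ | ∃ y ∈ Iinv, y ≠ 0 ∧ v y = (n : WithTop ℤ)} vInv)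
    (hvTr : IsLeast {n : ℤ | ∃ r ∈ traceIdeal R I, algebraMap R Q r ≠ 0 ∧
      v (algebraMap R Q r) = (n : WithTop ℤ)} vTr) :
    vTr = vI + vInv :=
  stmt3_general R Q v I Iinv hIinv vI vInv vTr hvI hvInv hvTr
end

section
/- Let R be a one-dimensional local domain with fraction field Q, and let M be a finitely generated R-module of rank one (i.e., dim_Q(M ⊗_R Q) = 1). If f : M → R is a nonzero R-linear map with image I = f(M), then tr_R(M) = tr_R(I). -/
open TensorProduct

/-!
Over `Q`, the base change of `f` is a nonzero functional on a line, hence injective; so `f`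
kills exactly the elements `m` with `1 ⊗ m = 0`, and every functional `g : M → R` kills those
too because `R → Q` is injective. Thus every `g` factors through `f : M ↠ I`, giving
`tr(M) ≤ tr(I)`; the reverse inclusion holds for any quotient of `M`.
-/

open Module LinearMap

section TraceIdeal

variable {R M N : Type*} [CommRing R] [AddCommGroup M] [Module R M] [AddCommGroup N] [Module R N]

theorem range_le_traceIdeal (g : M →ₗ[R] R) : range g ≤ traceIdeal R M :=
  le_iSup (fun g : M →ₗ[R] R ↦ range g) g

theorem traceIdeal_le_of_surjective (p : M →ₗ[R] N) (hp : Function.Surjective p) :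
    traceIdeal R N ≤ traceIdeal R M :=
  iSup_le fun h ↦ range_comp_of_range_eq_top h (range_eq_top.mpr hp) ▸ range_le_traceIdeal _

theorem traceIdeal_le_traceIdeal_range_of_ker_le (f : M →ₗ[R] N)
    (hker : ∀ g : M →ₗ[R] R, ker f ≤ ker g) : traceIdeal R M ≤ traceIdeal R (range f) := by
  refine iSup_le fun g ↦ ?_
  let h : range f →ₗ[R] R := (ker f).liftQ g (hker g) ∘ₗ f.quotKerEquivRange.symm.toLinearMap
  have hg : h ∘ₗ f.rangeRestrict = g := by
    ext m
    change (ker f).liftQ g (hker g) (f.quotKerEquivRange.symm ⟨f m, mem_range_self f m⟩) = g m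
    rw [quotKerEquivRange_symm_apply_image, Submodule.mkQ_apply, Submodule.liftQ_apply]
  rw [← hg, range_comp_of_range_eq_top h f.range_rangeRestrict]
  exact range_le_traceIdeal h

theorem traceIdeal_eq_traceIdeal_range_of_ker_le (f : M →ₗ[R] N)
    (hker : ∀ g : M →ₗ[R] R, ker f ≤ ker g) : traceIdeal R M = traceIdeal R (range f) :=
  le_antisymm (traceIdeal_le_traceIdeal_range_of_ker_le f hker)
    (traceIdeal_le_of_surjective f.rangeRestrict f.surjective_rangeRestrict)

end TraceIdeal

section BaseChange

variable {R A M : Type*} [CommRing R] [CommRing A] [Algebra R A] [AddCommGroup M] [Module R M]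

theorem Module.Dual.baseChange_one_tmul (g : Dual R M) (m : M) :
    g.baseChange A (1 ⊗ₜ m) = algebraMap R A (g m) := by
  simp [Algebra.algebraMap_eq_smul_one]

theorem Module.Dual.baseChange_ne_zero (hA : Function.Injective (algebraMap R A))
    {g : Dual R M} (hg : g ≠ 0) : g.baseChange A ≠ 0 := by
  obtain ⟨m, hm⟩ : ∃ m, g m ≠ 0 := by
    by_contra! h
    exact hg (LinearMap.ext h)
  intro h0
  exact hm (hA (by rw [← g.baseChange_one_tmul, h0, LinearMap.zero_apply, map_zero]))

theorem ker_mk_one_le_ker (hA : Function.Injective (algebraMap R A)) (g : Dual R M) :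
    ker (mk R A M 1) ≤ ker g := fun m hm ↦ by
  rw [mem_ker, mk_apply] at hm
  exact hA (by rw [← g.baseChange_one_tmul, hm, map_zero, map_zero])

theorem ker_le_ker_mk_one_of_finrank_eq_one {K : Type*} [Field K] [Algebra R K]
    (hK : Function.Injective (algebraMap R K)) (hrank : finrank K (K ⊗[R] M) = 1)
    {f : Dual R M} (hf : f ≠ 0) : ker f ≤ ker (mk R K M 1) := fun m hm ↦ by
  have : IsSimpleModule K (K ⊗[R] M) := isSimpleModule_iff_finrank_eq_one.mpr hrank
  apply injective_of_ne_zero (f.baseChange_ne_zero hK hf)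
  rw [mk_apply, f.baseChange_one_tmul, mem_ker.mp hm, map_zero, map_zero]

end BaseChange

theorem stmt4_general (R : Type*) [CommRing R]
    (Q : Type*) [Field Q] [Algebra R Q] [IsFractionRing R Q]
    (M : Type*) [AddCommGroup M] [Module R M]
    (hrank : Module.finrank Q (Q ⊗[R] M) = 1)
    (f : M →ₗ[R] R) (hf : f ≠ 0) :
    traceIdeal R M = traceIdeal R (LinearMap.range f) := by
  have hQ := IsFractionRing.injective R Q
  exact traceIdeal_eq_traceIdeal_range_of_ker_le f fun g ↦
    (ker_le_ker_mk_one_of_finrank_eq_one hQ hrank hf).trans (ker_mk_one_le_ker hQ g)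

/-- Let `R` be a one-dimensional Noetherian local domain with fraction field `Q`, and
`M` a finitely generated `R`-module of rank one.  If `f : M → R` is a nonzero linear map
with image `I`, then `tr_R(M) = tr_R(I)`. -/
theorem stmt4 (R : Type*) [CommRing R] [IsDomain R] [IsNoetherianRing R] [IsLocalRing R]
    (hdim : ringKrullDim R = 1)
    (Q : Type*) [Field Q] [Algebra R Q] [IsFractionRing R Q]
    (M : Type*) [AddCommGroup M] [Module R M] [Module.Finite R M]
    (hrank : Module.finrank Q (Q ⊗[R] M) = 1)
    (f : M →ₗ[R] R) (hf : f ≠ 0) :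
    traceIdeal R M = traceIdeal R (LinearMap.range f) :=
  stmt4_general R Q M hrank f hf
end

section
/- Let (R, 𝔪) be a Noetherian local ring that is not a field, such that the maximal ideal 𝔪 has no nonzero free direct summand. Then the trace ideal of 𝔪 equals 𝔪, i.e., tr_R(𝔪) = 𝔪. -/
/-- Let `(R, 𝔪)` be a Noetherian local ring which is not a field, such that `𝔪` has no
nonzero free direct summand (equivalently, no `R`-linear surjection `𝔪 → R`).
Then `tr_R(𝔪) = 𝔪`. -/
theorem stmt5 (R : Type*) [CommRing R] [IsNoetherianRing R] [IsLocalRing R]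
    (hfield : ¬ IsField R)
    (hnofree : ¬ ∃ f : (IsLocalRing.maximalIdeal R) →ₗ[R] R, Function.Surjective f) :
    traceIdeal R (IsLocalRing.maximalIdeal R) = IsLocalRing.maximalIdeal R := by
  set m := IsLocalRing.maximalIdeal R with hm
  have hle : m ≤ traceIdeal R m := by
    have : LinearMap.range m.subtype = m := Submodule.range_subtype m
    calc m = LinearMap.range m.subtype := this.symm
    _ ≤ _ := le_iSup (fun f : m →ₗ[R] R => LinearMap.range f) m.subtype
  by_contra hne
  have htop : traceIdeal R m = ⊤ := by
    by_contra htop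
    exact hne ((IsLocalRing.maximalIdeal.isMaximal R).eq_of_le htop hle).symm
  have h1 : (1 : R) ∈ ⨆ f : m →ₗ[R] R, LinearMap.range f := by
    rw [show (⨆ f : m →ₗ[R] R, LinearMap.range f) = traceIdeal R m from rfl, htop]; trivial
  -- write 1 as a finite sum of elements of ranges
  rw [Submodule.mem_iSup_iff_exists_finsupp] at h1
  obtain ⟨a, ha, hsum⟩ := h1
  -- some a f is a unit, else 1 ∈ m
  have : ∃ f, IsUnit (a f) := by
    by_contra hall
    push_neg at hall
    have hmem : (1 : R) ∈ m := by
      rw [← hsum]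
      refine Submodule.sum_mem _ fun f _ => ?_
      exact hall f
    exact (IsLocalRing.maximalIdeal.isMaximal R).ne_top (Ideal.eq_top_of_isUnit_mem _ hmem isUnit_one)
  obtain ⟨f, hu⟩ := this
  obtain ⟨x, hx⟩ := ha f
  obtain ⟨u, hu'⟩ := hu
  refine hnofree ⟨(↑u⁻¹ : R) • f, fun r => ?_⟩
  refine ⟨r • x, ?_⟩
  have : f (r • x) = r * ↑u := by rw [map_smul, hx, ← hu', smul_eq_mul]
  rw [LinearMap.smul_apply, this, smul_eq_mul, ← mul_assoc, mul_comm (↑u⁻¹ : R) r,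
    mul_assoc, u.inv_mul, mul_one]
end

section
/- Let k be a field, and let R = k[[t^5, t^6, t^8 + t^9]] ⊆ k[[t]]. Then the conductor valuation of R is c_R = 10, and with α_3 = 1 + t the unit coefficient of the third generator, o(α_3) + a_1 = 1 + 5 = 6 < 10 = c_R; the sufficient criterion o(α_r) + a ≥ c_R for quasihomogeneity fails for this ring. -/
/-!
Every monomial in `t^5, t^6, t^8 + t^9` has vanishing coefficients of `t^1, …, t^4` and equal
coefficients of `t^8` and `t^9`; both conditions are preserved by sums and products, hence hold
on all of `R` (they only see finitely many coefficients). So `t^9 ∉ R` and `c_R ≥ 10`. Conversely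
`t^10, t^11, t^12` are products of `t^5, t^6`, while `t^14 = (t^8 + t^9) t^6 - t^15` and
`t^13 = (t^8 + t^9) t^5 - t^14`; multiplying by powers of `t^5` gives every `t^i` with `i ≥ 10`.
-/

open PowerSeries

theorem Submonoid.pow_mem_of_le {M : Type*} [Monoid M] (S : Submonoid M) {x : M} {a n : ℕ}
    (hn : 0 < n) (hxn : x ^ n ∈ S) (hbase : ∀ j < n, x ^ (a + j) ∈ S) :
    ∀ i, a ≤ i → x ^ i ∈ S := by
  intro i
  induction i using Nat.strong_induction_on with
  | _ i ih =>
    intro hai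
    by_cases hi : i < a + n
    · simpa [Nat.add_sub_cancel' hai] using hbase (i - a) (by omega)
    · rw [show i = n + (i - n) by omega, pow_add]
      exact S.mul_mem hxn (ih (i - n) (by omega) (by omega))

namespace PowerSeries

variable (k : Type*) [Field k]

def coeffConditionSubalgebra : Subalgebra k k⟦X⟧ where
  carrier := {p | coeff 1 p = 0 ∧ coeff 2 p = 0 ∧ coeff 3 p = 0 ∧ coeff 4 p = 0 ∧
    coeff 9 p = coeff 8 p}
  mul_mem' := by
    rintro f g ⟨f1, f2, f3, f4, f98⟩ ⟨g1, g2, g3, g4, g98⟩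
    refine ⟨?_, ?_, ?_, ?_, ?_⟩ <;>
    · simp [coeff_mul, Finset.Nat.sum_antidiagonal_eq_sum_range_succ_mk, Finset.sum_range_succ,
        f1, f2, f3, f4, f98, g1, g2, g3, g4, g98]
  add_mem' := by
    rintro f g ⟨f1, f2, f3, f4, f98⟩ ⟨g1, g2, g3, g4, g98⟩
    simp [f1, f2, f3, f4, f98, g1, g2, g3, g4, g98]
  algebraMap_mem' r := by simp

theorem adjoin_le_coeffConditionSubalgebra :
    Algebra.adjoin k ({X ^ 5, X ^ 6, X ^ 8 + X ^ 9} : Set k⟦X⟧) ≤ coeffConditionSubalgebra k := by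
  rw [Algebra.adjoin_le_iff]
  rintro p (rfl | rfl | rfl) <;> refine ⟨?_, ?_, ?_, ?_, ?_⟩ <;> simp [coeff_X_pow]

variable {k}

theorem X_pow_nine_notMem {S : Subalgebra k k⟦X⟧}
    (hgen : ∀ f ∈ S, ∀ N : ℕ,
      ∃ p ∈ Algebra.adjoin k ({X ^ 5, X ^ 6, X ^ 8 + X ^ 9} : Set k⟦X⟧),
        ∀ m : ℕ, m < N → coeff m f = coeff m p) :
    (X : k⟦X⟧) ^ 9 ∉ S := by
  intro h9
  obtain ⟨p, hp, hcoeff⟩ := hgen _ h9 10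
  have h98 : coeff 9 p = coeff 8 p := (adjoin_le_coeffConditionSubalgebra k hp).2.2.2.2
  have e9 := hcoeff 9 (by norm_num)
  have e8 := hcoeff 8 (by norm_num)
  simp only [coeff_X_pow_self, coeff_X_pow, show (8 : ℕ) ≠ 9 by norm_num, if_false] at e9 e8
  exact one_ne_zero (e9.trans (h98.trans e8.symm))

theorem X_pow_mem_of_ten_le {S : Subalgebra k k⟦X⟧}
    (h5 : (X : k⟦X⟧) ^ 5 ∈ S) (h6 : (X : k⟦X⟧) ^ 6 ∈ S) (h89 : (X : k⟦X⟧) ^ 8 + X ^ 9 ∈ S) :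
    ∀ i, 10 ≤ i → (X : k⟦X⟧) ^ i ∈ S := by
  have h14 : (X : k⟦X⟧) ^ 14 ∈ S := by
    rw [show (X : k⟦X⟧) ^ 14 = (X ^ 8 + X ^ 9) * X ^ 6 - (X ^ 5) ^ 3 by ring]
    exact sub_mem (mul_mem h89 h6) (pow_mem h5 3)
  have h13 : (X : k⟦X⟧) ^ 13 ∈ S := by
    rw [show (X : k⟦X⟧) ^ 13 = (X ^ 8 + X ^ 9) * X ^ 5 - X ^ 14 by ring]
    exact sub_mem (mul_mem h89 h5) h14
  refine S.toSubmonoid.pow_mem_of_le (by norm_num) h5 fun j hj => ?_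
  interval_cases j
  · simpa [← pow_add] using mul_mem h5 h5
  · simpa [← pow_add] using mul_mem h5 h6
  · simpa [← pow_add] using mul_mem h6 h6
  · exact h13
  · exact h14

end PowerSeries

theorem stmt18_general (k : Type*) [Field k]
    (S : Subalgebra k (PowerSeries k))
    -- the generators of `R` lie in `S`
    (hx : ((X : PowerSeries k) ^ 5 ∈ S) ∧ ((X : PowerSeries k) ^ 6 ∈ S) ∧
      ((X : PowerSeries k) ^ 8 + X ^ 9 ∈ S))
    -- `S = k[[t^5, t^6, t^8 + t^9]]`: every element of `S` is a limit of polynomials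
    -- in the generators
    (hgen : ∀ f ∈ S, ∀ N : ℕ,
      ∃ p ∈ Algebra.adjoin k ({X ^ 5, X ^ 6, X ^ 8 + X ^ 9} : Set (PowerSeries k)),
        ∀ m : ℕ, m < N → coeff m f = coeff m p) :
    -- the conductor valuation is `c_R = 10` …
    ((∀ i : ℕ, 10 ≤ i → (X : PowerSeries k) ^ i ∈ S) ∧
      (∀ c' : ℕ, (∀ i : ℕ, c' ≤ i → (X : PowerSeries k) ^ i ∈ S) → 10 ≤ c')) ∧
    -- … `o(α_3) = o(1 + t) = 1` …
    ((1 + X - 1 : PowerSeries k).order = (1 : ℕ∞)) ∧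
    -- … and the criterion `o(α_r) + a ≥ c_R` fails: `1 + 5 = 6 < 10`
    (1 + 5 < 10) := by
  obtain ⟨h5, h6, h89⟩ := hx
  have conductor_le : ∀ c' : ℕ, (∀ i, c' ≤ i → (X : PowerSeries k) ^ i ∈ S) → 10 ≤ c' :=
    fun c' hc' => by_contra fun hlt => X_pow_nine_notMem hgen (hc' 9 (by omega))
  exact ⟨⟨X_pow_mem_of_ten_le h5 h6 h89, conductor_le⟩,
    by rw [add_sub_cancel_left, order_X], by norm_num⟩

/-- Let `R = k[[t^5, t^6, t^8 + t^9]] ⊆ k⟦t⟧` (with `k` algebraically closed of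
characteristic `0`).  Then the conductor valuation of `R` is `c_R = 10`; moreover with
`α_3 = 1 + t` the unit coefficient of the third generator (`t^8 + t^9 = (1+t)t^8`), one
has `o(α_3) + a_1 = 1 + 5 = 6 < 10 = c_R`, so the sufficient criterion
`o(α_r) + a ≥ c_R` for quasihomogeneity fails for this ring. -/
theorem stmt18 (k : Type*) [Field k] [IsAlgClosed k] [CharZero k]
    (S : Subalgebra k (PowerSeries k))
    -- the generators of `R` lie in `S`
    (hx : ((X : PowerSeries k) ^ 5 ∈ S) ∧ ((X : PowerSeries k) ^ 6 ∈ S) ∧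
      ((X : PowerSeries k) ^ 8 + X ^ 9 ∈ S))
    -- `S = k[[t^5, t^6, t^8 + t^9]]`: every element of `S` is a limit of polynomials
    -- in the generators
    (hgen : ∀ f ∈ S, ∀ N : ℕ,
      ∃ p ∈ Algebra.adjoin k ({X ^ 5, X ^ 6, X ^ 8 + X ^ 9} : Set (PowerSeries k)),
        ∀ m : ℕ, m < N → coeff m f = coeff m p) :
    -- the conductor valuation is `c_R = 10` …
    ((∀ i : ℕ, 10 ≤ i → (X : PowerSeries k) ^ i ∈ S) ∧
      (∀ c' : ℕ, (∀ i : ℕ, c' ≤ i → (X : PowerSeries k) ^ i ∈ S) → 10 ≤ c')) ∧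
    -- … `o(α_3) = o(1 + t) = 1` …
    ((1 + X - 1 : PowerSeries k).order = (1 : ℕ∞)) ∧
    -- … and the criterion `o(α_r) + a ≥ c_R` fails: `1 + 5 = 6 < 10`
    (1 + 5 < 10) :=
  stmt18_general k S hx hgen
end
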